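/- arXiv:1503.05663 — 7 statements merged into one kernel-verified Lean document; each statement's English description precedes it below -/
import Mathlib

section
/- (Cassini's identity for Fibonacci elements in an arbitrary algebra.) Let A be a (possibly nonassociative, noncommutative) nonunital ring which is an ℝ-algebra, let n ∈ ℕ, and let e_0, e_1, ..., e_n be elements of A. Let (f_m)_{m∈ℤ} be the integer-indexed Fibonacci sequence and for each m ∈ ℤ set F_m = Σ_{k=0}^{n} f_{m+k} • e_k. Then for every m ∈ ℤ, F_{m−1}·F_{m+1} − F_m·F_m = (−1)^m • (F_{−1}·F_1 − F_0·F_0). -/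
/-!
The recurrence `f (m + 2) = f (m + 1) + f m` passes to `F` by linearity, and then the Cassini
defect `F (m - 1) * F (m + 1) - F m * F m` changes sign at every step of `m`.
The sign flip is an identity of noncommutative polynomials in `F (m - 1)` and `F m`, so it holds
without associativity or commutativity.
-/

open Finset

theorem sum_smul_shift_add_two {A : Type*} [AddCommGroup A] {f : ℤ → ℤ}
    (hf : ∀ m : ℤ, f (m + 2) = f (m + 1) + f m) (s : Finset ℕ) (e : ℕ → A) (m : ℤ) :
    ∑ k ∈ s, f (m + 2 + k) • e k = ∑ k ∈ s, f (m + 1 + k) • e k + ∑ k ∈ s, f (m + k) • e k := by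
  rw [← sum_add_distrib]
  refine sum_congr rfl fun k _ => ?_
  rw [← add_smul, add_right_comm, hf, add_right_comm, add_right_comm m 1]

def cassiniDefect {A : Type*} [NonUnitalNonAssocRing A] (F : ℤ → A) (m : ℤ) : A :=
  F (m - 1) * F (m + 1) - F m * F m

theorem cassiniDefect_add_one {A : Type*} [NonUnitalNonAssocRing A] {F : ℤ → A}
    (hF : ∀ m : ℤ, F (m + 2) = F (m + 1) + F m) (m : ℤ) :
    cassiniDefect F (m + 1) = -cassiniDefect F m := by
  have h₁ := hF (m - 1)
  rw [sub_add_cancel, show m - 1 + 2 = m + 1 by ring] at h₁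
  rw [cassiniDefect, cassiniDefect, add_sub_cancel_right, add_assoc, one_add_one_eq_two, hF, h₁]
  noncomm_ring

theorem eq_neg_one_zpow_smul_of_add_one_eq_neg {𝕜 M : Type*} [DivisionRing 𝕜]
    [AddCommGroup M] [Module 𝕜 M] {D : ℤ → M} (hD : ∀ m : ℤ, D (m + 1) = -D m) (m : ℤ) :
    D m = ((-1 : 𝕜) ^ m) • D 0 := by
  induction m using Int.induction_on with
  | zero => simp
  | succ k ih => rw [hD, ih, zpow_add_one₀ (neg_ne_zero.2 one_ne_zero), mul_neg_one, neg_smul]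
  | pred k ih =>
    have h : D (-k) = -D (-k - 1) := by simpa using hD (-k - 1)
    rw [neg_eq_iff_eq_neg.1 h.symm, ih,
      zpow_sub_one₀ (neg_ne_zero.2 one_ne_zero), inv_neg_one, mul_neg_one, neg_smul]

theorem fibonacci_element_cassini_general {A : Type*} [NonUnitalNonAssocRing A]
    [Module ℝ A]
    (n : ℕ) (e : ℕ → A)
    (f : ℤ → ℤ)
    (hf : ∀ m : ℤ, f (m + 2) = f (m + 1) + f m)
    (F : ℤ → A)
    (hF : ∀ m : ℤ, F m = ∑ k ∈ Finset.range (n + 1), f (m + k) • e k) :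
    ∀ m : ℤ, F (m - 1) * F (m + 1) - F m * F m =
      ((-1 : ℝ) ^ m) • (F (-1) * F 1 - F 0 * F 0) := by
  have hF_rec : ∀ m : ℤ, F (m + 2) = F (m + 1) + F m := by
    simpa only [hF] using sum_smul_shift_add_two hf (range (n + 1)) e
  intro m
  simpa [cassiniDefect] using
    eq_neg_one_zpow_smul_of_add_one_eq_neg (cassiniDefect_add_one hF_rec) m

/-- Cassini's identity for Fibonacci elements in an arbitrary (nonunital, possibly
nonassociative, noncommutative) `ℝ`-algebra:
`F (m-1) * F (m+1) - F m * F m = (-1) ^ m • (F (-1) * F 1 - F 0 * F 0)`. -/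
theorem fibonacci_element_cassini {A : Type*} [NonUnitalNonAssocRing A]
    [Module ℝ A] [SMulCommClass ℝ A A] [IsScalarTower ℝ A A]
    (n : ℕ) (e : ℕ → A)
    (f : ℤ → ℤ) (hf0 : f 0 = 0) (hf1 : f 1 = 1)
    (hf : ∀ m : ℤ, f (m + 2) = f (m + 1) + f m)
    (F : ℤ → A)
    (hF : ∀ m : ℤ, F m = ∑ k ∈ Finset.range (n + 1), f (m + k) • e k) :
    ∀ m : ℤ, F (m - 1) * F (m + 1) - F m * F m =
      ((-1 : ℝ) ^ m) • (F (-1) * F 1 - F 0 * F 0) :=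
  fibonacci_element_cassini_general n e f hf F hF
end

section
/- (Analogue of Cassini's identity.) Let A be a (possibly nonassociative, noncommutative) nonunital ring which is an ℝ-algebra, let n ∈ ℕ, and let e_0, e_1, ..., e_n be elements of A. Let (f_m)_{m∈ℤ} be the integer-indexed Fibonacci sequence and for each m ∈ ℤ set F_m = Σ_{k=0}^{n} f_{m+k} • e_k. Then for every m ∈ ℤ, F_{m+1}·F_{m−1} − F_m·F_m = (−1)^m • (F_1·F_{−1} − F_0·F_0). -/
/-! `F` inherits the Fibonacci recurrence from `f`. For any sequence `G` with that recurrence,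
expanding `G (m + 2)` and `G (m + 1)` by it shows that `G (m + 1) * G (m - 1) - G m * G m`
changes sign when `m` is shifted by one; only distributivity is used, never associativity or
commutativity, so the sign `(-1) ^ m` follows in any nonunital nonassociative ring. -/

def FibRecurrent {M : Type*} [Add M] (G : ℤ → M) : Prop :=
  ∀ m, G (m + 2) = G (m + 1) + G m

theorem FibRecurrent.sum_smul_shift {R M : Type*} [Semiring R] [AddCommMonoid M] [Module R M]
    {f : ℤ → R} (hf : FibRecurrent f) (s : Finset ℕ) (e : ℕ → M) :
    FibRecurrent fun m => ∑ k ∈ s, f (m + k) • e k := by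
  intro m
  simp only [← Finset.sum_add_distrib, ← add_smul]
  refine Finset.sum_congr rfl fun k _ => ?_
  rw [add_right_comm, hf, add_right_comm]

theorem FibRecurrent.antiperiodic_cassini {A : Type*} [NonUnitalNonAssocRing A] {G : ℤ → A}
    (hG : FibRecurrent G) :
    Function.Antiperiodic (fun m => G (m + 1) * G (m - 1) - G m * G m) 1 := by
  intro m
  have hsucc : G (m + 1 + 1) = G (m + 1) + G m := by rw [add_assoc, one_add_one_eq_two, hG]
  have hpred : G (m + 1) = G m + G (m - 1) := by
    simpa [show m - 1 + 2 = m + 1 by ring] using hG (m - 1)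
  simp only [add_sub_cancel_right, hsucc]
  nth_rewrite 3 [hpred]
  simp only [add_mul, mul_add]
  abel

theorem Function.Antiperiodic.eq_neg_one_zpow_smul {K M : Type*} [DivisionRing K]
    [AddCommGroup M] [Module K M] {c : ℤ → M} (h : Function.Antiperiodic c 1) (m : ℤ) :
    c m = (-1 : K) ^ m • c 0 := by
  have := h.add_zsmul_eq (x := 0) m
  rwa [zero_add, zsmul_one, Int.cast_id, ← Int.cast_smul_eq_zsmul K, Int.cast_negOnePow] at this

theorem fibonacci_element_cassini'_general {A : Type*} [NonUnitalNonAssocRing A]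
    [Module ℝ A]
    (n : ℕ) (e : ℕ → A)
    (f : ℤ → ℤ)
    (hf : ∀ m : ℤ, f (m + 2) = f (m + 1) + f m)
    (F : ℤ → A)
    (hF : ∀ m : ℤ, F m = ∑ k ∈ Finset.range (n + 1), f (m + k) • e k) :
    ∀ m : ℤ, F (m + 1) * F (m - 1) - F m * F m =
      ((-1 : ℝ) ^ m) • (F 1 * F (-1) - F 0 * F 0) := by
  have hFrec : FibRecurrent F := by
    rw [funext hF]
    exact FibRecurrent.sum_smul_shift hf _ e
  intro m
  simpa using hFrec.antiperiodic_cassini.eq_neg_one_zpow_smul (K := ℝ) m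

/-- Analogue of Cassini's identity for Fibonacci elements in an arbitrary (nonunital,
possibly nonassociative, noncommutative) `ℝ`-algebra:
`F (m+1) * F (m-1) - F m * F m = (-1) ^ m • (F 1 * F (-1) - F 0 * F 0)`. -/
theorem fibonacci_element_cassini' {A : Type*} [NonUnitalNonAssocRing A]
    [Module ℝ A] [SMulCommClass ℝ A A] [IsScalarTower ℝ A A]
    (n : ℕ) (e : ℕ → A)
    (f : ℤ → ℤ) (hf0 : f 0 = 0) (hf1 : f 1 = 1)
    (hf : ∀ m : ℤ, f (m + 2) = f (m + 1) + f m)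
    (F : ℤ → A)
    (hF : ∀ m : ℤ, F m = ∑ k ∈ Finset.range (n + 1), f (m + k) • e k) :
    ∀ m : ℤ, F (m + 1) * F (m - 1) - F m * F m =
      ((-1 : ℝ) ^ m) • (F 1 * F (-1) - F 0 * F 0) :=
  fibonacci_element_cassini'_general n e f hf F hF
end

section
/- (Intermediate identity in the proof of Cassini's identity.) Let A be a (possibly nonassociative, noncommutative) nonunital ring which is an ℝ-algebra, let n ∈ ℕ, and let e_0, e_1, ..., e_n be elements of A. Let (f_m)_{m∈ℤ} be the integer-indexed Fibonacci sequence and set F_m = Σ_{k=0}^{n} f_{m+k} • e_k for m ∈ ℤ. Then for every m ∈ ℤ, F_{m−1}·F_{m+1} − F_m·F_m = (−1)^m • Σ_{j=0}^{n} (−1)^j (e_j · F_{1−j}). -/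
/-!
Expanding `F` bilinearly, both sides become double sums over `e j * e k`, and the claim reduces
to the scalar identity `f (a - 1) * f (b + 1) - f a * f b = (-1) ^ a * f (b - a + 1)` at
`a = m + j`, `b = m + k`. For any sequence obeying the Fibonacci recurrence, the left side
`D a b` satisfies `D (a + 1) b = -D a (b - 1)`, and `D 0 b = f (b + 1)` because `f (-1) = 1`;
induction on `a ∈ ℤ` in both directions gives the identity.
-/

open Finset

section FibonacciRecurrence

variable {R : Type*} [CommRing R] {f : ℤ → R}

theorem fib_rec_mul_sub_mul_succ (hf : ∀ m, f (m + 2) = f (m + 1) + f m) (a b : ℤ) :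
    f a * f (b + 1) - f (a + 1) * f b = -(f (a - 1) * f b - f a * f (b - 1)) := by
  have ha := hf (a - 1)
  have hb := hf (b - 1)
  simp only [sub_add_cancel, show ∀ c : ℤ, c - 1 + 2 = c + 1 from fun c => by ring] at ha hb
  linear_combination (-f b) * ha + f a * hb

theorem fib_rec_mul_sub_mul (hf0 : f 0 = 0) (hf1 : f 1 = 1)
    (hf : ∀ m, f (m + 2) = f (m + 1) + f m) (a b : ℤ) :
    f (a - 1) * f (b + 1) - f a * f b = ((-1 : Rˣ) ^ a : Rˣ) * f (b - a + 1) := by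
  have hf_neg_one : f (-1) = 1 := by
    have h := hf (-1)
    rw [show (-1 : ℤ) + 2 = 1 by norm_num, neg_add_cancel, hf0, hf1] at h
    linear_combination -h
  induction a using Int.induction_on generalizing b with
  | zero => simp [hf0, hf_neg_one]
  | succ a ih =>
    have h := ih (b - 1)
    rw [sub_add_cancel] at h
    rw [add_sub_cancel_right, fib_rec_mul_sub_mul_succ hf, h, zpow_add_one,
      show b - (a + 1) + 1 = b - 1 - a + 1 by ring]
    simp
  | pred a ih =>
    have h := fib_rec_mul_sub_mul_succ hf (-a - 1) (b + 1)
    rw [sub_add_cancel, add_sub_cancel_right, ih] at h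
    rw [sub_eq_add_neg (-(a : ℤ)), zpow_add, zpow_neg_one, inv_neg_one, ← sub_eq_add_neg,
      show b - (-a - 1) + 1 = b + 1 - -a + 1 by ring]
    simp only [mul_neg_one, Units.val_neg]
    linear_combination h

end FibonacciRecurrence

theorem sum_smul_mul_sum_smul {ι κ R A : Type*} [Monoid R] [NonUnitalNonAssocSemiring A]
    [MulAction R A] [IsScalarTower R A A] [SMulCommClass R A A]
    (s : Finset ι) (t : Finset κ) (c : ι → R) (d : κ → R) (x : ι → A) (y : κ → A) :
    (∑ i ∈ s, c i • x i) * ∑ j ∈ t, d j • y j = ∑ i ∈ s, ∑ j ∈ t, (c i * d j) • (x i * y j) := by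
  simp only [sum_mul_sum, smul_mul_smul_comm]

/-- Intermediate identity in the proof of Cassini's identity:
`F (m-1) * F (m+1) - F m * F m = (-1) ^ m • ∑ j, (-1) ^ j • (e j * F (1 - j))`. -/
theorem fibonacci_element_cassini_intermediate {A : Type*} [NonUnitalNonAssocRing A]
    [Module ℝ A] [SMulCommClass ℝ A A] [IsScalarTower ℝ A A]
    (n : ℕ) (e : ℕ → A)
    (f : ℤ → ℤ) (hf0 : f 0 = 0) (hf1 : f 1 = 1)
    (hf : ∀ m : ℤ, f (m + 2) = f (m + 1) + f m)
    (F : ℤ → A)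
    (hF : ∀ m : ℤ, F m = ∑ k ∈ Finset.range (n + 1), f (m + k) • e k) :
    ∀ m : ℤ, F (m - 1) * F (m + 1) - F m * F m =
      ((-1 : ℝ) ^ m) •
        ∑ j ∈ Finset.range (n + 1), (-1 : ℤ) ^ j • (e j * F (1 - (j : ℤ))) := by
  intro m
  set g : ℤ → ℝ := fun k => f k
  have hFg (a : ℤ) : F a = ∑ k ∈ range (n + 1), g (a + k) • e k := by
    simp only [hF, g, Int.cast_smul_eq_zsmul]
  have hg := fib_rec_mul_sub_mul (f := g) (by simp [g, hf0]) (by simp [g, hf1])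
    (fun m => by simp [g, hf m])
  calc F (m - 1) * F (m + 1) - F m * F m
      = ∑ j ∈ range (n + 1), ∑ k ∈ range (n + 1),
          (g (m - 1 + j) * g (m + 1 + k) - g (m + j) * g (m + k)) • (e j * e k) := by
        simp only [hFg, sum_smul_mul_sum_smul, ← sum_sub_distrib, ← sub_smul]
    _ = ∑ j ∈ range (n + 1), ∑ k ∈ range (n + 1),
          ((-1 : ℝ) ^ m * ((-1) ^ j * g (1 - j + k))) • (e j * e k) := by
        refine sum_congr rfl fun j _ => sum_congr rfl fun k _ => ?_
        rw [show m - 1 + j = m + j - 1 by ring, show m + 1 + k = m + k + 1 by ring, hg,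
          show m + k - (m + j) + 1 = 1 - j + k by ring, Units.val_zpow_eq_zpow_val,
          zpow_add₀ (by norm_num), zpow_natCast, mul_assoc, Units.val_neg, Units.val_one]
    _ = _ := by
        simp only [hFg, mul_sum, smul_sum, mul_smul_comm, smul_smul, ← Int.cast_smul_eq_zsmul ℝ,
          Int.cast_pow, Int.cast_neg, Int.cast_one]
end

section
/- Let (f_m) be the Fibonacci sequence. For n ∈ ℕ, define the imaginary Fibonacci quaternion F_n as the vector (f_n, f_{n+1}, f_{n+2}) ∈ ℝ³ (the pure quaternion f_n i + f_{n+1} j + f_{n+2} k). Then for all k, m, n ∈ ℕ, the mixed product vanishes: ⟨F_k × F_m, F_n⟩ = 0, where × is the cross product on ℝ³ and ⟨·,·⟩ is the standard inner product. -/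
/-- The imaginary Fibonacci quaternion `F n = f n • i + f (n+1) • j + f (n+2) • k`,
identified with the vector `(f n, f (n+1), f (n+2)) ∈ ℝ³`. -/
def imaginaryFibonacciQuaternion (n : ℕ) : Fin 3 → ℝ :=
  ![(Nat.fib n : ℝ), (Nat.fib (n + 1) : ℝ), (Nat.fib (n + 2) : ℝ)]

/-! The recurrence `f (n+2) = f n + f (n+1)` puts every `F n` in the plane orthogonal to
`(1, 1, -1)`, and the triple product of three vectors in a plane through the origin is the
determinant of a matrix with nontrivial kernel. -/

open Matrix

theorem cross_dotProduct_eq_zero_of_dotProduct_eq_zero {R : Type*} [CommRing R] [IsDomain R]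
    {a u v w : Fin 3 → R} (ha : a ≠ 0) (hu : u ⬝ᵥ a = 0) (hv : v ⬝ᵥ a = 0)
    (hw : w ⬝ᵥ a = 0) : u ⨯₃ v ⬝ᵥ w = 0 := by
  rw [dotProduct_comm, triple_product_permutation, triple_product_eq_det]
  refine exists_mulVec_eq_zero_iff.mp ⟨a, ha, funext fun i => ?_⟩
  fin_cases i <;> simpa [mulVec]

theorem imaginaryFibonacciQuaternion_dotProduct_eq_zero (n : ℕ) :
    imaginaryFibonacciQuaternion n ⬝ᵥ ![1, 1, -1] = 0 := by
  simp [imaginaryFibonacciQuaternion, Nat.fib_add_two]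

/-- The mixed product of any three imaginary Fibonacci quaternions vanishes. -/
theorem imaginaryFibonacciQuaternion_mixed_product (k m n : ℕ) :
    dotProduct
      (crossProduct (imaginaryFibonacciQuaternion k) (imaginaryFibonacciQuaternion m))
      (imaginaryFibonacciQuaternion n) = 0 :=
  cross_dotProduct_eq_zero_of_dotProduct_eq_zero (by simp)
    (imaginaryFibonacciQuaternion_dotProduct_eq_zero k)
    (imaginaryFibonacciQuaternion_dotProduct_eq_zero m)
    (imaginaryFibonacciQuaternion_dotProduct_eq_zero n)
end

section
/- Let (f_m) be the Fibonacci sequence. For n ∈ ℕ, define the imaginary Fibonacci quaternion F_n as the vector (f_n, f_{n+1}, f_{n+2}) ∈ ℝ³. Then any three imaginary Fibonacci quaternions F_k, F_m, F_n are linearly dependent over ℝ, i.e. the family (F_k, F_m, F_n) is not linearly independent. -/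
theorem LinearIndependent.not_forall_apply_eq_zero_of_card_eq_finrank
    {K V W ι : Type*} [DivisionRing K] [AddCommGroup V] [Module K V] [FiniteDimensional K V]
    [AddCommGroup W] [Module K W] [Fintype ι] {v : ι → V} (hv : LinearIndependent K v)
    (hcard : Fintype.card ι = Module.finrank K V) {f : V →ₗ[K] W} (hf : f ≠ 0) :
    ¬ ∀ i, f (v i) = 0 := by
  intro hker
  have hspan : Submodule.span K (Set.range v) ≤ LinearMap.ker f :=
    Submodule.span_le.mpr <| Set.range_subset_iff.mpr hker
  rw [hv.span_eq_top_of_card_eq_finrank' hcard, top_le_iff, LinearMap.ker_eq_top] at hspan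
  exact hf hspan

theorem imaginaryFibonacciQuaternion_zero_add_one (n : ℕ) :
    imaginaryFibonacciQuaternion n 0 + imaginaryFibonacciQuaternion n 1 =
      imaginaryFibonacciQuaternion n 2 := by
  simp [imaginaryFibonacciQuaternion, Nat.fib_add_two]

/-- Any three imaginary Fibonacci quaternions are linearly dependent over `ℝ`. -/
theorem imaginaryFibonacciQuaternion_not_linearIndependent (k m n : ℕ) :
    ¬ LinearIndependent ℝ
        ![imaginaryFibonacciQuaternion k, imaginaryFibonacciQuaternion m,
          imaginaryFibonacciQuaternion n] := by
  intro h
  let φ : (Fin 3 → ℝ) →ₗ[ℝ] ℝ :=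
    LinearMap.proj (R := ℝ) (φ := fun _ : Fin 3 => ℝ) 0 + LinearMap.proj 1 - LinearMap.proj 2
  have hφ : φ ≠ 0 := fun h0 => by
    simpa [φ] using LinearMap.congr_fun h0 (Pi.single 2 1)
  refine h.not_forall_apply_eq_zero_of_card_eq_finrank (by simp) hφ fun i => ?_
  fin_cases i <;> simp [φ, imaginaryFibonacciQuaternion_zero_add_one]
end

section
/- (Intermediate computation for imaginary Fibonacci octonions.) Let (f_m)_{m∈ℤ} be the integer-indexed Fibonacci sequence. For n ∈ ℕ define the imaginary Fibonacci octonion F_n as the vector (f_n, f_{n+1}, f_{n+2}, f_{n+3}, f_{n+4}, f_{n+5}, f_{n+6}) ∈ ℝ⁷, and let × denote the 7-dimensional cross product given coordinatewise by (x × y)_1 = x_2y_4 − x_4y_2 + x_3y_7 − x_7y_3 + x_5y_6 − x_6y_5, (x × y)_2 = x_3y_5 − x_5y_3 + x_4y_1 − x_1y_4 + x_6y_7 − x_7y_6, (x × y)_3 = x_4y_6 − x_6y_4 + x_5y_2 − x_2y_5 + x_7y_1 − x_1y_7, (x × y)_4 = x_5y_7 − x_7y_5 + x_6y_3 − x_3y_6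 + x_1y_2 − x_2y_1, (x × y)_5 = x_6y_1 − x_1y_6 + x_7y_4 − x_4y_7 + x_2y_3 − x_3y_2, (x × y)_6 = x_7y_2 − x_2y_7 + x_1y_5 − x_5y_1 + x_3y_4 − x_4y_3, (x × y)_7 = x_1y_3 − x_3y_1 + x_2y_6 − x_6y_2 + x_4y_5 − x_5y_4. Then for all k, m ∈ ℕ, F_k × F_m = (−1)^k f_{m−k} · (−3, 2, 7, 0, 4, −9, 3). -/
/-- The 7-dimensional cross product on `ℝ⁷` induced by octonion multiplication
(coordinates `x 0, ..., x 6` correspond to `x₁, ..., x₇`). -/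
def crossProduct7 (x y : Fin 7 → ℝ) : Fin 7 → ℝ :=
  ![x 1 * y 3 - x 3 * y 1 + x 2 * y 6 - x 6 * y 2 + x 4 * y 5 - x 5 * y 4,
    x 2 * y 4 - x 4 * y 2 + x 3 * y 0 - x 0 * y 3 + x 5 * y 6 - x 6 * y 5,
    x 3 * y 5 - x 5 * y 3 + x 4 * y 1 - x 1 * y 4 + x 6 * y 0 - x 0 * y 6,
    x 4 * y 6 - x 6 * y 4 + x 5 * y 2 - x 2 * y 5 + x 0 * y 1 - x 1 * y 0,
    x 5 * y 0 - x 0 * y 5 + x 6 * y 3 - x 3 * y 6 + x 1 * y 2 - x 2 * y 1,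
    x 6 * y 1 - x 1 * y 6 + x 0 * y 4 - x 4 * y 0 + x 2 * y 3 - x 3 * y 2,
    x 0 * y 2 - x 2 * y 0 + x 1 * y 5 - x 5 * y 1 + x 3 * y 4 - x 4 * y 3]

/-!
Since `f (n + i) = f (n - 1) * fib i + f n * fib (i + 1)`, every `F n` lies in the plane spanned
by `u = (fib i)ᵢ` and `v = (fib (i + 1))ᵢ`, with coordinates `(f (n - 1), f n)`. The cross
product is bilinear and alternating, so `F k × F m` is the determinant
`f (k - 1) * f m - f k * f (m - 1)` times `u × v = (-3, 2, 7, 0, 4, -9, 3)`, and d'Ocagne's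
identity evaluates that determinant as `(-1) ^ k * f (m - k)`.
-/

theorem crossProduct7_smul_add_smul (u v : Fin 7 → ℝ) (a b c d : ℝ) :
    crossProduct7 (a • u + b • v) (c • u + d • v) = (a * d - b * c) • crossProduct7 u v := by
  ext i
  fin_cases i <;> simp [crossProduct7] <;> ring

theorem crossProduct7_fib_fib_succ :
    crossProduct7 (fun i => (Nat.fib i : ℝ)) (fun i => (Nat.fib (i + 1) : ℝ)) =
      ![-3, 2, 7, 0, 4, -9, 3] := by
  ext i
  fin_cases i <;> simp [crossProduct7, Nat.fib_add_two] <;> norm_num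

section FibonacciRecurrence

variable {f : ℤ → ℤ}

theorem add_natCast_eq_of_fib_recurrence (hf : ∀ m : ℤ, f (m + 2) = f (m + 1) + f m)
    (n : ℤ) (i : ℕ) :
    f (n + i) = f (n - 1) * Nat.fib i + f n * Nat.fib (i + 1) := by
  induction i using Nat.twoStepInduction with
  | zero => simp
  | one =>
    have h := hf (n - 1)
    rw [show n - 1 + 2 = n + 1 by ring, sub_add_cancel] at h
    simp [h, add_comm]
  | more i ih₀ ih₁ =>
    have h := hf (n + i)
    rw [show n + i + 1 = n + (i + 1 : ℕ) by push_cast; ring, ih₀, ih₁] at h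
    rw [show n + (i + 2 : ℕ) = n + i + 2 by push_cast; ring, h, Nat.fib_add_two (n := i + 1),
      Nat.fib_add_two (n := i)]
    push_cast
    ring

theorem dOcagne_of_fib_recurrence (hf : ∀ m : ℤ, f (m + 2) = f (m + 1) + f m)
    (hf0 : f 0 = 0) (hf1 : f 1 = 1) (k : ℕ) (m : ℤ) :
    f (k - 1) * f m - f k * f (m - 1) = (-1) ^ k * f (m - k) := by
  induction k generalizing m with
  | zero =>
    have hfm1 : f (-1) = 1 := by have := hf (-1); norm_num [hf0, hf1] at this; omega
    simp [hf0, hfm1]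
  | succ k ih =>
    -- shifting both indices by one flips the sign of the determinant
    have hk : f (k + 1) = f k + f (k - 1) := by
      simpa [show (k : ℤ) - 1 + 2 = k + 1 by ring] using hf (k - 1)
    have hm : f m = f (m - 1) + f (m - 2) := by
      simpa [show m - 2 + 2 = m by ring, show m - 2 + 1 = m - 1 by ring] using hf (m - 2)
    have hprev := ih (m - 1)
    rw [show m - 1 - 1 = m - 2 by ring, show m - 1 - k = m - (k + 1) by ring] at hprev
    push_cast
    rw [add_sub_cancel_right, pow_succ]
    linear_combination f k * hm - f (m - 1) * hk - hprev

end FibonacciRecurrence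

/-- Intermediate computation for imaginary Fibonacci octonions:
`F k × F m = (-1) ^ k * f (m - k) • (-3, 2, 7, 0, 4, -9, 3)`, where `F n` is the
imaginary Fibonacci octonion `(f n, f (n+1), ..., f (n+6)) ∈ ℝ⁷`. -/
theorem imaginaryFibonacciOctonion_cross (f : ℤ → ℤ)
    (hf0 : f 0 = 0) (hf1 : f 1 = 1)
    (hf : ∀ m : ℤ, f (m + 2) = f (m + 1) + f m)
    (F : ℕ → Fin 7 → ℝ)
    (hF : ∀ n : ℕ, F n = fun i : Fin 7 => (f (n + (i : ℕ)) : ℝ)) :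
    ∀ k m : ℕ, crossProduct7 (F k) (F m) =
      ((-1 : ℝ) ^ k * (f ((m : ℤ) - (k : ℤ)) : ℝ)) •
        ![-3, 2, 7, 0, 4, -9, 3] := by
  intro k m
  have hplane : ∀ n : ℕ, F n = (f (n - 1) : ℝ) • (fun i : Fin 7 => (Nat.fib i : ℝ)) +
      (f n : ℝ) • (fun i : Fin 7 => (Nat.fib (i + 1) : ℝ)) := by
    intro n
    ext i
    simp [hF, add_natCast_eq_of_fib_recurrence hf]
  rw [hplane, hplane, crossProduct7_smul_add_smul, crossProduct7_fib_fib_succ]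
  exact_mod_cast congrArg (fun t : ℤ => (t : ℝ) • ![(-3 : ℝ), 2, 7, 0, 4, -9, 3])
    (dOcagne_of_fib_recurrence hf hf0 hf1 k m)
end

section
/- Let (f_m) be the Fibonacci sequence. For n ∈ ℕ define the imaginary Fibonacci octonion F_n as the vector (f_n, f_{n+1}, f_{n+2}, f_{n+3}, f_{n+4}, f_{n+5}, f_{n+6}) ∈ ℝ⁷, and let × denote the 7-dimensional cross product on ℝ⁷ given coordinatewise by (x × y)_1 = x_2y_4 − x_4y_2 + x_3y_7 − x_7y_3 + x_5y_6 − x_6y_5, (x × y)_2 = x_3y_5 − x_5y_3 + x_4y_1 − x_1y_4 + x_6y_7 − x_7y_6, (x × y)_3 = x_4y_6 − x_6y_4 + x_5y_2 − x_2y_5 + x_7y_1 − x_1y_7, (x × y)_4 = x_5y_7 − x_7y_5 + x_6y_3 − x_3y_6 + x_1y_2 − x_2y_1, (x × y)_5 = x_6y_1 − x_1y_6 + x_7y_4 − x_4y_7 + x_2y_3 − x_3y_2, (x × y)_6 = x_7y_2 − x_2y_7 + x_1y_5 − x_5y_1 + x_3y_4 − x_4y_3, (x × y)_7 = x_1y_3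 − x_3y_1 + x_2y_6 − x_6y_2 + x_4y_5 − x_5y_4. Then for all k, m, n ∈ ℕ, the mixed product vanishes: ⟨F_k × F_m, F_n⟩ = 0, where ⟨·,·⟩ is the standard inner product on ℝ⁷. -/
/-- The imaginary Fibonacci octonion `F n = (f n, f (n+1), ..., f (n+6)) ∈ ℝ⁷`. -/
def imaginaryFibonacciOctonion (n : ℕ) : Fin 7 → ℝ :=
  fun i => (Nat.fib (n + (i : ℕ)) : ℝ)

/-!
Since `f (m + 2) = f (m + 1) + f m` holds in every coordinate, `F (n + 2) = F (n + 1) + F n`, so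
every `F n` lies in the plane spanned by `F 0` and `F 1`. The mixed product `⟨x × y, z⟩` is
trilinear and vanishes as soon as two of its arguments coincide, hence it vanishes on any three
vectors of a plane.
-/

theorem LinearMap.map_eq_zero_of_mem_span_pair {R M N : Type*} [CommSemiring R]
    [AddCommMonoid M] [AddCommMonoid N] [Module R M] [Module R N]
    (ω : M →ₗ[R] M →ₗ[R] M →ₗ[R] N) (h₁₂ : ∀ x z, ω x x z = 0) (h₁₃ : ∀ x y, ω x y x = 0)
    (h₂₃ : ∀ x y, ω x y y = 0) {u v x y z : M} (hx : x ∈ Submodule.span R {u, v})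
    (hy : y ∈ Submodule.span R {u, v}) (hz : z ∈ Submodule.span R {u, v}) :
    ω x y z = 0 := by
  obtain ⟨a, b, rfl⟩ := Submodule.mem_span_pair.mp hx
  obtain ⟨c, d, rfl⟩ := Submodule.mem_span_pair.mp hy
  obtain ⟨e, f, rfl⟩ := Submodule.mem_span_pair.mp hz
  simp [h₁₂, h₁₃, h₂₃]

theorem crossProduct7_add_left (x y z : Fin 7 → ℝ) :
    crossProduct7 (x + y) z = crossProduct7 x z + crossProduct7 y z := by
  ext i
  fin_cases i <;>
    simp only [crossProduct7, Pi.add_apply, Fin.zero_eta, Fin.mk_one, Fin.reduceFinMk,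
      Matrix.cons_val_zero, Matrix.cons_val_one, Matrix.cons_val] <;>
    ring

theorem crossProduct7_add_right (x y z : Fin 7 → ℝ) :
    crossProduct7 x (y + z) = crossProduct7 x y + crossProduct7 x z := by
  ext i
  fin_cases i <;>
    simp only [crossProduct7, Pi.add_apply, Fin.zero_eta, Fin.mk_one, Fin.reduceFinMk,
      Matrix.cons_val_zero, Matrix.cons_val_one, Matrix.cons_val] <;>
    ring

theorem crossProduct7_smul_left (c : ℝ) (x y : Fin 7 → ℝ) :
    crossProduct7 (c • x) y = c • crossProduct7 x y := by
  ext i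
  fin_cases i <;>
    simp only [crossProduct7, Pi.smul_apply, smul_eq_mul, Fin.zero_eta, Fin.mk_one,
      Fin.reduceFinMk, Matrix.cons_val_zero, Matrix.cons_val_one, Matrix.cons_val] <;>
    ring

theorem crossProduct7_smul_right (c : ℝ) (x y : Fin 7 → ℝ) :
    crossProduct7 x (c • y) = c • crossProduct7 x y := by
  ext i
  fin_cases i <;>
    simp only [crossProduct7, Pi.smul_apply, smul_eq_mul, Fin.zero_eta, Fin.mk_one,
      Fin.reduceFinMk, Matrix.cons_val_zero, Matrix.cons_val_one, Matrix.cons_val] <;>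
    ring

theorem crossProduct7_self (x : Fin 7 → ℝ) : crossProduct7 x x = 0 := by
  ext i
  fin_cases i <;>
    simp only [crossProduct7, Pi.zero_apply, Fin.zero_eta, Fin.mk_one, Fin.reduceFinMk,
      Matrix.cons_val_zero, Matrix.cons_val_one, Matrix.cons_val] <;>
    ring

theorem crossProduct7_dotProduct_self_left (x y : Fin 7 → ℝ) : crossProduct7 x y ⬝ᵥ x = 0 := by
  simp only [crossProduct7, dotProduct, Fin.sum_univ_seven, Matrix.cons_val_zero,
    Matrix.cons_val_one, Matrix.cons_val]
  ring

theorem crossProduct7_dotProduct_self_right (x y : Fin 7 → ℝ) : crossProduct7 x y ⬝ᵥ y = 0 := by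
  simp only [crossProduct7, dotProduct, Fin.sum_univ_seven, Matrix.cons_val_zero,
    Matrix.cons_val_one, Matrix.cons_val]
  ring

def mixedProduct7 : (Fin 7 → ℝ) →ₗ[ℝ] (Fin 7 → ℝ) →ₗ[ℝ] (Fin 7 → ℝ) →ₗ[ℝ] ℝ :=
  (LinearMap.mk₂ ℝ crossProduct7 crossProduct7_add_left crossProduct7_smul_left
    crossProduct7_add_right crossProduct7_smul_right).compr₂ (dotProductBilin ℝ ℝ)

theorem mixedProduct7_apply (x y z : Fin 7 → ℝ) :
    mixedProduct7 x y z = crossProduct7 x y ⬝ᵥ z :=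
  rfl

theorem imaginaryFibonacciOctonion_add_two (n : ℕ) :
    imaginaryFibonacciOctonion (n + 2) =
      imaginaryFibonacciOctonion (n + 1) + imaginaryFibonacciOctonion n := by
  ext i
  simp only [imaginaryFibonacciOctonion, Pi.add_apply, add_right_comm n _ (i : ℕ),
    Nat.fib_add_two]
  push_cast
  ring

theorem imaginaryFibonacciOctonion_mem_span (n : ℕ) :
    imaginaryFibonacciOctonion n ∈
      Submodule.span ℝ {imaginaryFibonacciOctonion 0, imaginaryFibonacciOctonion 1} := by
  induction n using Nat.twoStepInduction with
  | zero => exact Submodule.subset_span (by simp)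
  | one => exact Submodule.subset_span (by simp)
  | more n h₀ h₁ =>
    rw [imaginaryFibonacciOctonion_add_two]
    exact add_mem h₁ h₀

/-- The mixed product of any three imaginary Fibonacci octonions vanishes. -/
theorem imaginaryFibonacciOctonion_mixed_product (k m n : ℕ) :
    dotProduct
      (crossProduct7 (imaginaryFibonacciOctonion k) (imaginaryFibonacciOctonion m))
      (imaginaryFibonacciOctonion n) = 0 :=
  mixedProduct7.map_eq_zero_of_mem_span_pair
    (fun x z => by rw [mixedProduct7_apply, crossProduct7_self, zero_dotProduct])
    crossProduct7_dotProduct_self_left crossProduct7_dotProduct_self_right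
    (imaginaryFibonacciOctonion_mem_span k) (imaginaryFibonacciOctonion_mem_span m)
    (imaginaryFibonacciOctonion_mem_span n)
end
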